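/- arXiv:2012.04519 — 5 statements merged into one kernel-verified Lean document; each statement's English description precedes it below -/
import Mathlib

section
/- Let W ≤ GL(V) be a nontrivial irreducible complex reflection group of rank n (dim V = n). Then the unweighted W-Laplacian is scalar: Σ_{τ ∈ R} (id_V − τ) = h·id_V in End(V), where h = (|R| + |R*|)/n is the Coxeter number of W. -/
open scoped BigOperators

noncomputable section

namespace CD

variable {V : Type*} [AddCommGroup V] [Module ℂ V]

/-- A unitary reflection: an invertible linear map whose fixed space is a hyperplane. -/
def IsReflection (τ : (V →ₗ[ℂ] V)ˣ) : Prop :=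
  Module.finrank ℂ V =
    Module.finrank ℂ (LinearMap.ker ((τ : V →ₗ[ℂ] V) - LinearMap.id)) + 1

/-- The set of reflections of a subgroup `W ≤ GL(V)`. -/
def reflections (W : Subgroup (V →ₗ[ℂ] V)ˣ) : Set ((V →ₗ[ℂ] V)ˣ) :=
  {τ | τ ∈ W ∧ IsReflection τ}

/-- The set of reflecting hyperplanes of `W`. -/
def hyperplanes (W : Subgroup (V →ₗ[ℂ] V)ˣ) : Set (Submodule ℂ V) :=
  (fun τ : (V →ₗ[ℂ] V)ˣ => LinearMap.ker ((τ : V →ₗ[ℂ] V) - LinearMap.id)) '' reflections W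

/-- `W` is a complex reflection group: a finite subgroup of `GL(V)` generated by
its reflections. -/
def IsReflectionGroup (W : Subgroup (V →ₗ[ℂ] V)ˣ) : Prop :=
  (W : Set ((V →ₗ[ℂ] V)ˣ)).Finite ∧ Subgroup.closure (reflections W) = W

/-- `W` is irreducible: the only `W`-stable subspaces of `V` are `0` and `V`. -/
def IsIrreducible (W : Subgroup (V →ₗ[ℂ] V)ˣ) : Prop :=
  ∀ U : Submodule ℂ V, (∀ w ∈ W, ∀ v ∈ U, (w : V →ₗ[ℂ] V) v ∈ U) → U = ⊥ ∨ U = ⊤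

/-- A regular vector: one lying on no reflecting hyperplane. -/
def IsRegular (W : Subgroup (V →ₗ[ℂ] V)ˣ) (v : V) : Prop :=
  ∀ H ∈ hyperplanes W, v ∉ H

/-- A Coxeter element: an element of `W` with a regular eigenvector of
eigenvalue `exp(2πi/h)`. -/
def IsCoxeterElement (W : Subgroup (V →ₗ[ℂ] V)ˣ) (h : ℕ) (c : (V →ₗ[ℂ] V)ˣ) : Prop :=
  c ∈ W ∧ ∃ v : V, IsRegular W v ∧
    (c : V →ₗ[ℂ] V) v = Complex.exp (2 * Real.pi * Complex.I / (h : ℂ)) • v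

/-- A flat: an intersection of reflecting hyperplanes (with `V` itself the empty
intersection). -/
def IsFlat (W : Subgroup (V →ₗ[ℂ] V)ˣ) (X : Submodule ℂ V) : Prop :=
  ∃ S ⊆ hyperplanes W, X = sInf S

/-- The parabolic subgroup of `W` attached to a subspace `X`: the elements of `W`
fixing `X` pointwise. -/
def parabolic (W : Subgroup (V →ₗ[ℂ] V)ˣ) (X : Submodule ℂ V) :
    Subgroup (V →ₗ[ℂ] V)ˣ where
  carrier := {w | w ∈ W ∧ ∀ x ∈ X, (w : V →ₗ[ℂ] V) x = x}
  one_mem' := ⟨W.one_mem, fun _ _ => rfl⟩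
  mul_mem' := by
    rintro a b ⟨ha, ha'⟩ ⟨hb, hb'⟩
    refine ⟨W.mul_mem ha hb, fun x hx => ?_⟩
    have : ((a * b : (V →ₗ[ℂ] V)ˣ) : V →ₗ[ℂ] V) x
        = (a : V →ₗ[ℂ] V) ((b : V →ₗ[ℂ] V) x) := rfl
    rw [this, hb' x hx, ha' x hx]
  inv_mem' := by
    rintro a ⟨ha, ha'⟩
    refine ⟨W.inv_mem ha, fun x hx => ?_⟩
    conv_lhs => rw [← ha' x hx]
    have : ((a⁻¹ : (V →ₗ[ℂ] V)ˣ) : V →ₗ[ℂ] V) ((a : V →ₗ[ℂ] V) x)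
        = (((a⁻¹ * a : (V →ₗ[ℂ] V)ˣ) : V →ₗ[ℂ] V)) x := rfl
    rw [this, inv_mul_cancel]
    rfl

/-- A parabolic tower: a chain `{1} = W₀ ≤ W₁ ≤ ⋯ ≤ Wₙ = W` of parabolic subgroups
attached to a decreasing chain of flats `Xᵢ` with `codim Xᵢ = i`. -/
def IsParabolicTower (W : Subgroup (V →ₗ[ℂ] V)ˣ) (n : ℕ)
    (Wt : ℕ → Subgroup (V →ₗ[ℂ] V)ˣ) : Prop :=
  ∃ Xs : ℕ → Submodule ℂ V,
    (∀ i ≤ n, IsFlat W (Xs i)) ∧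
    (∀ i ≤ n, Module.finrank ℂ V = Module.finrank ℂ (Xs i) + i) ∧
    (∀ i, i < n → Xs (i + 1) ≤ Xs i) ∧
    (∀ i ≤ n, Wt i = parabolic W (Xs i)) ∧
    (∀ i, i < n → Wt i ≤ Wt (i + 1)) ∧
    Wt 0 = ⊥ ∧ Wt n = W

/-- The weighted Laplacian attached to a set of reflections and a weight function. -/
def lap (Rs : Set ((V →ₗ[ℂ] V)ˣ)) (wt : (V →ₗ[ℂ] V)ˣ → ℂ) : V →ₗ[ℂ] V :=
  ∑ᶠ τ ∈ Rs, wt τ • ((LinearMap.id : V →ₗ[ℂ] V) - (τ : V →ₗ[ℂ] V))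

/-!
The Laplacian `L = ∑_{τ ∈ R} (1 - τ)` commutes with `W`, since `R` is stable under conjugation,
so by Schur's lemma it is a scalar `μ`, and `μ n = tr L`. To compute the trace, group the
reflections by their hyperplane `H`. The pointwise stabiliser `W_H` consists of `1` and the
reflections with hyperplane `H`; it acts on the line `V ⧸ H` through a character `χ`, and
`tr (1 - g) = 1 - χ g`. The character is nontrivial, because a reflection acting trivially on
`V ⧸ H` would be a nontrivial unipotent element of finite order. Hence `∑_{g ∈ W_H} χ g = 0`, and
the reflections with hyperplane `H` contribute `|W_H| = |R_H| + 1` to the trace. Summing over `H`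
gives `tr L = |R| + |R*| = h n`.
-/

section LinearAlgebra

open LinearMap Module

variable {K M : Type*} [Field K] [AddCommGroup M] [Module K M]

theorem _root_.LinearMap.eq_trace_smul_id_of_finrank_eq_one (h : finrank K M = 1)
    (f : M →ₗ[K] M) : f = trace K M f • LinearMap.id := by
  have := Module.finite_of_finrank_eq_succ h
  obtain ⟨c, rfl⟩ := (f.existsUnique_eq_smul_id_of_finrank_eq_one h).exists
  simp [h]

theorem _root_.LinearMap.trace_comp_of_finrank_eq_one (h : finrank K M = 1) (f g : M →ₗ[K] M) :
    trace K M (f ∘ₗ g) = trace K M f * trace K M g := by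
  have := Module.finite_of_finrank_eq_succ h
  conv_lhs => rw [eq_trace_smul_id_of_finrank_eq_one h f, eq_trace_smul_id_of_finrank_eq_one h g]
  simp [h, comp_smul, smul_smul, mul_comm]

theorem _root_.LinearMap.trace_id_sub_eq_one_sub_trace_mapQ [FiniteDimensional K M]
    {H : Submodule K M} (hH : finrank K (M ⧸ H) = 1) {f : M →ₗ[K] M} (hfix : ∀ x ∈ H, f x = x)
    (hf : H ≤ H.comap f) :
    trace K M (LinearMap.id - f) = 1 - trace K (M ⧸ H) (H.mapQ H f hf) := by
  have hker : H ≤ ker (LinearMap.id - f) := fun x hx => by simp [hfix x hx]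
  have hfactor : H.mkQ ∘ₗ H.liftQ (LinearMap.id - f) hker = LinearMap.id - H.mapQ H f hf := by
    apply H.linearMap_qext
    ext x
    simp
  rw [← H.liftQ_mkQ _ hker, trace_comp_comm', hfactor, map_sub, trace_id, hH, Nat.cast_one]

theorem eq_one_of_pow_eq_one_of_sub_one_sq_eq_zero [CharZero K] {A : Type*} [Ring A]
    [Algebra K A] {x : A} {m : ℕ} (hm : m ≠ 0) (hx : x ^ m = 1) (hsq : (x - 1) ^ 2 = 0) :
    x = 1 := by
  have hpow : ∀ k : ℕ, x ^ k = 1 + k • (x - 1) := by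
    intro k
    induction k with
    | zero => simp
    | succ k ih =>
      have : (x - 1) * x = x - 1 := by
        rw [← sub_eq_zero, ← hsq]
        noncomm_ring
      rw [pow_succ, ih, add_mul, one_mul, smul_mul_assoc, this, succ_nsmul]
      abel
  have hzero : (m : K) • (x - 1) = 0 := by
    rw [Nat.cast_smul_eq_nsmul, ← add_eq_left (a := 1), ← hpow, hx]
  rw [← sub_eq_zero, ← inv_smul_smul₀ (Nat.cast_ne_zero.mpr hm : (m : K) ≠ 0) (x - 1), hzero,
    smul_zero]

end LinearAlgebra

section ReflectionGroups

open LinearMap Module Finset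

variable {W : Subgroup (V →ₗ[ℂ] V)ˣ}

theorem not_isReflection_one : ¬ IsReflection (1 : (V →ₗ[ℂ] V)ˣ) := by
  intro h
  rw [IsReflection, Units.val_one, ← Module.End.one_eq_id, sub_self, ker_zero, finrank_top] at h
  omega

theorem ker_conj_sub_id (w τ : (V →ₗ[ℂ] V)ˣ) :
    ker (((w * τ * w⁻¹ : (V →ₗ[ℂ] V)ˣ) : V →ₗ[ℂ] V) - LinearMap.id) =
      (ker ((τ : V →ₗ[ℂ] V) - LinearMap.id)).map
        (GeneralLinearGroup.generalLinearEquiv ℂ V w : V →ₗ[ℂ] V) := by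
  set e := GeneralLinearGroup.generalLinearEquiv ℂ V w
  have he_symm (x : V) : e.symm x = ((w⁻¹ : (V →ₗ[ℂ] V)ˣ) : V →ₗ[ℂ] V) x := by
    rw [← GeneralLinearGroup.coeFn_generalLinearEquiv, map_inv]
    rfl
  have hw (x : V) : (w : V →ₗ[ℂ] V) (((w⁻¹ : (V →ₗ[ℂ] V)ˣ) : V →ₗ[ℂ] V) x) = x := by
    rw [← Module.End.mul_apply, Units.mul_inv, Module.End.one_apply]
  have hconj : ((w * τ * w⁻¹ : (V →ₗ[ℂ] V)ˣ) : V →ₗ[ℂ] V) - LinearMap.id =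
      (e : V →ₗ[ℂ] V) ∘ₗ ((τ : V →ₗ[ℂ] V) - LinearMap.id) ∘ₗ (e.symm : V →ₗ[ℂ] V) := by
    ext x
    simp [he_symm, hw, e]
  rw [hconj, LinearEquiv.ker_comp, ker_comp, Submodule.comap_equiv_eq_map_symm, e.symm_symm]

theorem IsReflection.conj {τ : (V →ₗ[ℂ] V)ˣ} (hτ : IsReflection τ) (w : (V →ₗ[ℂ] V)ˣ) :
    IsReflection (w * τ * w⁻¹) := by
  rw [IsReflection, ker_conj_sub_id, LinearEquiv.finrank_map_eq]
  exact hτ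

theorem conj_mem_reflections {w τ : (V →ₗ[ℂ] V)ˣ} (hw : w ∈ W) (hτ : τ ∈ reflections W) :
    w * τ * w⁻¹ ∈ reflections W :=
  ⟨W.mul_mem (W.mul_mem hw hτ.1) (W.inv_mem hw), hτ.2.conj w⟩

theorem finite_reflections (hW : (W : Set (V →ₗ[ℂ] V)ˣ).Finite) : (reflections W).Finite :=
  hW.subset fun _ hτ => hτ.1

theorem lap_one_eq_sum (hR : (reflections W).Finite) :
    lap (reflections W) 1 = ∑ τ ∈ hR.toFinset, (LinearMap.id - (τ : V →ₗ[ℂ] V)) := by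
  simp only [lap, Pi.one_apply, one_smul, finsum_mem_eq_finite_toFinset_sum _ hR]

theorem commute_lap_reflections (hR : (reflections W).Finite) {w : (V →ₗ[ℂ] V)ˣ} (hw : w ∈ W) :
    Commute (w : V →ₗ[ℂ] V) (lap (reflections W) 1) := by
  rw [lap_one_eq_sum hR, Commute, SemiconjBy, Finset.mul_sum, Finset.sum_mul]
  refine Finset.sum_nbij' (fun τ => w * τ * w⁻¹) (fun τ => w⁻¹ * τ * w) ?_ ?_ ?_ ?_ ?_
  · intro τ hτ
    simpa using conj_mem_reflections hw (by simpa using hτ)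
  · intro τ hτ
    simpa using conj_mem_reflections (W.inv_mem hw) (by simpa using hτ)
  · intro τ _
    group
  · intro τ _
    group
  · intro τ _
    rw [← Module.End.one_eq_id, mul_sub, sub_mul, mul_one, one_mul, ← Units.val_mul,
      ← Units.val_mul, inv_mul_cancel_right]

theorem finrank_eq_finrank_add_one_of_mem_hyperplanes {H : Submodule ℂ V}
    (hH : H ∈ hyperplanes W) : finrank ℂ V = finrank ℂ H + 1 := by
  obtain ⟨τ, hτ, rfl⟩ := hH
  exact hτ.2

theorem finrank_quotient_eq_one_of_mem_hyperplanes [FiniteDimensional ℂ V] {H : Submodule ℂ V}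
    (hH : H ∈ hyperplanes W) : finrank ℂ (V ⧸ H) = 1 := by
  have := H.finrank_quotient_add_finrank
  have := finrank_eq_finrank_add_one_of_mem_hyperplanes hH
  omega

theorem mem_parabolic_iff [FiniteDimensional ℂ V] {H : Submodule ℂ V} (hH : H ∈ hyperplanes W)
    {g : (V →ₗ[ℂ] V)ˣ} :
    g ∈ parabolic W H ↔ g = 1 ∨ g ∈ reflections W ∧ ker ((g : V →ₗ[ℂ] V) - LinearMap.id) = H := by
  constructor
  · intro hg
    by_cases hg1 : g = 1
    · exact .inl hg1
    have hle : H ≤ ker ((g : V →ₗ[ℂ] V) - LinearMap.id) := fun x hx => by simp [hg.2 x hx]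
    have hne : ker ((g : V →ₗ[ℂ] V) - LinearMap.id) ≠ ⊤ := fun htop =>
      hg1 (Units.ext (sub_eq_zero.mp (ker_eq_top.mp htop)))
    have hker : ker ((g : V →ₗ[ℂ] V) - LinearMap.id) = H := by
      have := Submodule.finrank_lt hne
      have := finrank_eq_finrank_add_one_of_mem_hyperplanes hH
      exact (Submodule.eq_of_le_of_finrank_le hle (by omega)).symm
    refine .inr ⟨⟨hg.1, ?_⟩, hker⟩
    rw [IsReflection, hker]
    exact finrank_eq_finrank_add_one_of_mem_hyperplanes hH
  · rintro (rfl | ⟨hg, rfl⟩)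
    · exact (parabolic W H).one_mem
    · exact ⟨hg.1, fun x hx => by simpa [sub_eq_zero] using hx⟩

theorem le_comap_of_mem_parabolic {X : Submodule ℂ V} {g : (V →ₗ[ℂ] V)ˣ}
    (hg : g ∈ parabolic W X) : X ≤ X.comap (g : V →ₗ[ℂ] V) := fun x hx => by
  rw [Submodule.mem_comap, hg.2 x hx]
  exact hx

def lineCharacter (W : Subgroup (V →ₗ[ℂ] V)ˣ) (H : Submodule ℂ V)
    (hH : finrank ℂ (V ⧸ H) = 1) : parabolic W H →* ℂ where
  toFun g := trace ℂ (V ⧸ H)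
    (H.mapQ H ((g : (V →ₗ[ℂ] V)ˣ) : V →ₗ[ℂ] V) (le_comap_of_mem_parabolic g.2))
  map_one' := by
    have := Module.finite_of_finrank_eq_succ hH
    change trace ℂ (V ⧸ H) (H.mapQ H LinearMap.id _) = 1
    rw [Submodule.mapQ_id, trace_id, hH, Nat.cast_one]
  map_mul' g g' := by
    rw [← trace_comp_of_finrank_eq_one hH, ← Submodule.mapQ_comp]
    rfl

theorem trace_id_sub_eq_one_sub_lineCharacter [FiniteDimensional ℂ V] {H : Submodule ℂ V}
    (hH : finrank ℂ (V ⧸ H) = 1) (g : parabolic W H) :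
    trace ℂ V (LinearMap.id - ((g : (V →ₗ[ℂ] V)ˣ) : V →ₗ[ℂ] V)) = 1 - lineCharacter W H hH g :=
  trace_id_sub_eq_one_sub_trace_mapQ hH g.2.2 _

theorem lineCharacter_ne_one {H : Submodule ℂ V} [Finite (parabolic W H)]
    (hH : H ∈ hyperplanes W) (hH1 : finrank ℂ (V ⧸ H) = 1) : lineCharacter W H hH1 ≠ 1 := by
  obtain ⟨τ, hτ, hτH⟩ := hH
  intro hχ
  have hτP : τ ∈ parabolic W H := ⟨hτ.1, fun x hx => by
    rw [← hτH] at hx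
    simpa [sub_eq_zero] using hx⟩
  have hτ_bar := eq_trace_smul_id_of_finrank_eq_one hH1
    (H.mapQ H (τ : V →ₗ[ℂ] V) (le_comap_of_mem_parabolic hτP))
  rw [show trace ℂ _ _ = 1 from DFunLike.congr_fun hχ ⟨τ, hτP⟩, one_smul] at hτ_bar
  -- `τ` acts trivially on `V ⧸ H` and on `H`, so `τ - 1` maps `V` into `H` and `H` to `0`.
  have hsq : ((τ : V →ₗ[ℂ] V) - 1) ^ 2 = 0 := by
    ext x
    have hx := (Submodule.Quotient.eq _).mp (DFunLike.congr_fun hτ_bar (Submodule.Quotient.mk x))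
    rw [← hτH] at hx
    simpa [sq] using hx
  have hpow : (τ : V →ₗ[ℂ] V) ^ Nat.card (parabolic W H) = 1 := by
    have := congrArg (fun g : parabolic W H => ((g : (V →ₗ[ℂ] V)ˣ) : V →ₗ[ℂ] V))
      (pow_card_eq_one' (x := (⟨τ, hτP⟩ : parabolic W H)))
    simpa only [SubgroupClass.coe_pow, OneMemClass.coe_one, Units.val_pow_eq_pow_val,
      Units.val_one] using this
  have hτ1 := eq_one_of_pow_eq_one_of_sub_one_sq_eq_zero (K := ℂ) Nat.card_pos.ne' hpow hsq
  exact not_isReflection_one (Units.val_eq_one.mp hτ1 ▸ hτ.2)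

theorem sum_trace_id_sub_of_ker_eq [FiniteDimensional ℂ V] {H : Submodule ℂ V}
    (hH : H ∈ hyperplanes W) {F : Finset (V →ₗ[ℂ] V)ˣ}
    (hF : ∀ τ, τ ∈ F ↔ τ ∈ reflections W ∧ ker ((τ : V →ₗ[ℂ] V) - LinearMap.id) = H) :
    ∑ τ ∈ F, trace ℂ V (LinearMap.id - (τ : V →ₗ[ℂ] V)) = #F + 1 := by
  classical
  have hH1 := finrank_quotient_eq_one_of_mem_hyperplanes hH
  have h1F : 1 ∉ F := fun h => not_isReflection_one ((hF 1).mp h).1.2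
  have hP : ∀ g, g ∈ insert 1 F ↔ g ∈ parabolic W H := by
    simp [mem_parabolic_iff hH, hF]
  let : Fintype (parabolic W H) := Fintype.subtype (insert 1 F) hP
  have hχ := sum_hom_units_eq_zero _ (lineCharacter_ne_one hH hH1)
  calc ∑ τ ∈ F, trace ℂ V (LinearMap.id - (τ : V →ₗ[ℂ] V))
      = ∑ τ ∈ insert 1 F, trace ℂ V (LinearMap.id - (τ : V →ₗ[ℂ] V)) := by
        rw [Finset.sum_insert h1F, Units.val_one, ← Module.End.one_eq_id, sub_self, map_zero,
          zero_add]
    _ = ∑ g : parabolic W H, trace ℂ V (LinearMap.id - ((g : (V →ₗ[ℂ] V)ˣ) : V →ₗ[ℂ] V)) :=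
        Finset.sum_subtype _ hP _
    _ = ∑ g : parabolic W H, (1 - lineCharacter W H hH1 g) :=
        Finset.sum_congr rfl fun g _ => trace_id_sub_eq_one_sub_lineCharacter hH1 g
    _ = Fintype.card (parabolic W H) := by
        simp [Finset.sum_sub_distrib, hχ]
    _ = #F + 1 := by
        rw [Fintype.card_of_subtype _ hP, Finset.card_insert_of_notMem h1F, Nat.cast_succ]

theorem trace_lap_reflections [FiniteDimensional ℂ V] (hR : (reflections W).Finite) :
    trace ℂ V (lap (reflections W) 1) = ((reflections W).ncard + (hyperplanes W).ncard : ℕ) := by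
  classical
  have hHs : (hyperplanes W).Finite := hR.image _
  have hmaps : ∀ τ ∈ hR.toFinset, ker ((τ : V →ₗ[ℂ] V) - LinearMap.id) ∈ hHs.toFinset :=
    fun τ hτ => hHs.mem_toFinset.mpr (Set.mem_image_of_mem _ (hR.mem_toFinset.mp hτ))
  rw [lap_one_eq_sum hR, map_sum, ← Finset.sum_fiberwise_of_maps_to hmaps,
    Finset.sum_congr rfl fun H hH =>
      sum_trace_id_sub_of_ker_eq (hHs.mem_toFinset.mp hH) fun τ => by simp,
    Finset.sum_add_distrib, ← Nat.cast_sum, ← Finset.card_eq_sum_card_fiberwise hmaps,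
    Set.ncard_eq_toFinset_card _ hR, Set.ncard_eq_toFinset_card _ hHs]
  simp

theorem IsIrreducible.exists_eq_smul_id [FiniteDimensional ℂ V] [Nontrivial V]
    (hirr : IsIrreducible W) {f : V →ₗ[ℂ] V} (hf : ∀ w ∈ W, Commute (w : V →ₗ[ℂ] V) f) :
    ∃ μ : ℂ, f = μ • LinearMap.id := by
  obtain ⟨μ, hμ⟩ := Module.End.exists_eigenvalue f
  set E := Module.End.eigenspace f μ
  have hstable : ∀ w ∈ W, ∀ v ∈ E, (w : V →ₗ[ℂ] V) v ∈ E := by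
    intro w hw v hv
    rw [Module.End.mem_eigenspace_iff] at hv ⊢
    rw [← Module.End.mul_apply, ← (hf w hw).eq, Module.End.mul_apply, hv, map_smul]
  have htop := (hirr _ hstable).resolve_left (Module.End.hasEigenvalue_iff.mp hμ)
  refine ⟨μ, LinearMap.ext fun v => ?_⟩
  simpa using Module.End.mem_eigenspace_iff.mp (htop ▸ Submodule.mem_top : v ∈ E)

end ReflectionGroups

theorem unweighted_laplacian_is_coxeter_number_scalar_general
    [FiniteDimensional ℂ V] (n : ℕ) (hn : Module.finrank ℂ V = n)
    (W : Subgroup (V →ₗ[ℂ] V)ˣ)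
    (hW : IsReflectionGroup W) (hirr : IsIrreducible W)
    (h : ℕ) (hh : h * n = (reflections W).ncard + (hyperplanes W).ncard) :
    (∑ᶠ τ ∈ reflections W, ((LinearMap.id : V →ₗ[ℂ] V) - (τ : (V →ₗ[ℂ] V)ˣ)))
      = (h : ℂ) • (LinearMap.id : V →ₗ[ℂ] V) := by
  rcases subsingleton_or_nontrivial V with hV | hV
  · exact Subsingleton.elim _ _
  have hR := finite_reflections hW.1
  have hL : ∑ᶠ τ ∈ reflections W, ((LinearMap.id : V →ₗ[ℂ] V) - (τ : (V →ₗ[ℂ] V)ˣ)) =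
      lap (reflections W) 1 := by
    simp only [lap, Pi.one_apply, one_smul]
  obtain ⟨μ, hμ⟩ := IsIrreducible.exists_eq_smul_id hirr fun w hw => commute_lap_reflections hR hw
  have htrace := trace_lap_reflections hR
  rw [hμ, map_smul, LinearMap.trace_id, hn, ← hh, smul_eq_mul, Nat.cast_mul] at htrace
  have hn0 : (n : ℂ) ≠ 0 := Nat.cast_ne_zero.mpr (hn ▸ Module.finrank_pos.ne')
  rw [hL, hμ, mul_right_cancel₀ hn0 htrace]

/-- For a nontrivial irreducible complex reflection group `W` of
rank `n = dim V`, the unweighted `W`-Laplacian `∑_{τ ∈ R} (id - τ)` is scalar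
multiplication by the Coxeter number `h = (|R| + |R*|)/n`. -/
theorem unweighted_laplacian_is_coxeter_number_scalar
    [FiniteDimensional ℂ V] (n : ℕ) (hn : Module.finrank ℂ V = n)
    (W : Subgroup (V →ₗ[ℂ] V)ˣ)
    (hW : IsReflectionGroup W) (hnontrivial : W ≠ ⊥) (hirr : IsIrreducible W)
    (h : ℕ) (hh : h * n = (reflections W).ncard + (hyperplanes W).ncard) :
    (∑ᶠ τ ∈ reflections W, ((LinearMap.id : V →ₗ[ℂ] V) - (τ : (V →ₗ[ℂ] V)ˣ)))
      = (h : ℂ) • (LinearMap.id : V →ₗ[ℂ] V) :=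
  unweighted_laplacian_is_coxeter_number_scalar_general n hn W hW hirr h hh

end CD
end
end

section
/- Let W ≤ GL(V) be a nontrivial irreducible complex reflection group of rank n with Coxeter number h. Then for every 0 ≤ k ≤ n, the generalized Coxeter number of the character χ_k of the k-th exterior power Λ^kV equals hk; explicitly, |R|·binom(n,k) − Σ_{τ∈R} Tr(Λ^k τ) = h·k·binom(n,k), where Λ^kτ denotes the induced endomorphism of Λ^kV. -/
/-!
Let `τ` be a reflection with hyperplane `H`. In a basis extending one of `H` the matrix of `τ` is
the identity except in one column, so every principal `k × k` minor is `det τ` or `1`, and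
`tr ⋀ᵏτ = C(n, k) - (1 - det τ) C(n - 1, k - 1)`. Summing over `R` reduces the claim to
`∑_{τ ∈ R} det τ = -|R*|`. The reflections with hyperplane `H`, together with `1`, form the
pointwise stabiliser `W_H`, on which `det` is a nontrivial character: a map of finite order fixing
a hyperplane with determinant `1` would be a transvection. Hence `∑_{W_H} det = 0`, each hyperplane
contributes `-1`, and `h n = |R| + |R*|` together with `n C(n - 1, k - 1) = k C(n, k)` finishes.
-/

open scoped BigOperators

noncomputable section

namespace CD

variable {V : Type*} [AddCommGroup V] [Module ℂ V]

/-- The exterior algebra morphism induced by `f` preserves the `k`-th exterior power. -/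
theorem map_mem_exteriorPower {k : ℕ} (f : V →ₗ[ℂ] V) :
    ∀ x ∈ ⋀[ℂ]^k V, (ExteriorAlgebra.map f).toLinearMap x ∈ ⋀[ℂ]^k V := by
  have mono : ∀ (M N : Submodule ℂ (ExteriorAlgebra ℂ V)), M ≤ N → M ^ k ≤ N ^ k := by
    intro M N h
    induction k with
    | zero => simp
    | succ k ih => rw [pow_succ, pow_succ]; exact mul_le_mul' ih h
  intro x hx
  have key : Submodule.map (ExteriorAlgebra.map f).toLinearMap (⋀[ℂ]^k V) ≤ ⋀[ℂ]^k V := by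
    rw [show (⋀[ℂ]^k V) = LinearMap.range (ExteriorAlgebra.ι ℂ : V →ₗ[ℂ] _) ^ k from rfl,
      Submodule.map_pow]
    refine le_trans (mono _ _ ?_) le_rfl
    rw [ExteriorAlgebra.ι_range_map_map]
    exact LinearMap.map_le_range
  exact key ⟨x, hx, rfl⟩

/-- The endomorphism of the `k`-th exterior power `⋀ᵏV` induced by an endomorphism
of `V`. -/
def extMap (k : ℕ) (f : V →ₗ[ℂ] V) : (⋀[ℂ]^k V) →ₗ[ℂ] (⋀[ℂ]^k V) :=
  (ExteriorAlgebra.map f).toLinearMap.restrict (map_mem_exteriorPower f)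

end CD

open Module Set.powersetCard Finset

theorem Finset.card_filter_mem_powersetCard_succ {ι : Type*} [Fintype ι] [DecidableEq ι] (k : ℕ)
    (i : ι) : #{s ∈ powersetCard (k + 1) univ | i ∈ s} = (Fintype.card ι - 1).choose k := by
  simpa [singleton_subset_iff] using
    card_filter_powersetCard_subset {i} univ (k + 1) (subset_univ _) (by simp)

theorem Nat.mul_choose_sub_one (n k : ℕ) : n * (n - 1).choose k = n.choose (k + 1) * (k + 1) := by
  cases n with
  | zero => simp
  | succ m => exact Nat.add_one_mul_choose_eq m k

theorem Matrix.det_submatrix_updateCol_one {R α β : Type*} [CommRing R] [Fintype α] [DecidableEq α]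
    [DecidableEq β] {e : α → β} (he : Function.Injective e) (i : β) (c : β → R) :
    (((1 : Matrix β β R).updateCol i c).submatrix e e).det =
      if i ∈ Set.range e then c i else 1 := by
  split_ifs with hi
  · obtain ⟨p, rfl⟩ := hi
    have : ((1 : Matrix β β R).updateCol (e p) c).submatrix e e =
        (1 : Matrix α α R).updateCol p (fun a => c (e a)) := by
      ext a b
      simp [Matrix.updateCol_apply, Matrix.one_apply, he.eq_iff]
    rw [this]
    simpa [Matrix.one_apply] using Matrix.det_updateCol_sum (1 : Matrix α α R) p (c ∘ e)
  · have : ((1 : Matrix β β R).updateCol i c).submatrix e e = 1 := by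
      ext a b
      have : e b ≠ i := fun h => hi ⟨b, h⟩
      simp [this, Matrix.one_apply, he.eq_iff]
    rw [this, Matrix.det_one]

section Basis

variable {R M ι : Type*} [CommRing R] [AddCommGroup M] [Module R M] [Fintype ι]

theorem LinearMap.toMatrix_eq_updateCol_one [DecidableEq ι] (b : Basis ι R M) {f : M →ₗ[R] M}
    {i₀ : ι} (hf : ∀ j, j ≠ i₀ → f (b j) = b j) :
    toMatrix b b f = (1 : Matrix ι ι R).updateCol i₀ (b.repr (f (b i₀))) := by
  ext i j
  rw [toMatrix_apply, Matrix.updateCol_apply]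
  split_ifs with hj
  · rw [hj]
  · rw [hf j hj, b.repr_self, Finsupp.single_apply, Matrix.one_apply]
    simp only [eq_comm]

theorem LinearMap.det_eq_repr_of_forall_ne_apply_eq [DecidableEq ι] (b : Basis ι R M)
    {f : M →ₗ[R] M} {i₀ : ι} (hf : ∀ j, j ≠ i₀ → f (b j) = b j) :
    LinearMap.det f = b.repr (f (b i₀)) i₀ := by
  rw [← det_toMatrix b, toMatrix_eq_updateCol_one b hf, ← Matrix.submatrix_id_id
    ((1 : Matrix ι ι R).updateCol i₀ _), Matrix.det_submatrix_updateCol_one Function.injective_id,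
    if_pos ⟨i₀, rfl⟩]

variable [LinearOrder ι]

theorem exteriorPower.trace_map_eq_sum_det_submatrix (b : Basis ι R M) (k : ℕ)
    (f : M →ₗ[R] M) :
    LinearMap.trace R (⋀[R]^k M) (map k f) = ∑ s : Set.powersetCard ι k,
      ((LinearMap.toMatrix b b f).submatrix (ofFinEmbEquiv.symm s) (ofFinEmbEquiv.symm s)).det := by
  rw [LinearMap.trace_eq_matrix_trace R (b.exteriorPower k), Matrix.trace]
  refine Finset.sum_congr rfl fun s _ => ?_
  rw [Matrix.diag_apply, LinearMap.toMatrix_apply, basis_apply, map_apply_ιMulti_family,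
    basis_repr_apply, ιMulti_family, ιMultiDual_apply_ιMulti, ← Matrix.det_transpose]
  congr 1
  ext i j
  simp [LinearMap.toMatrix_apply]

theorem exteriorPower.trace_map_succ_of_forall_ne_apply_eq (b : Basis ι R M)
    {f : M →ₗ[R] M} {i₀ : ι} (hf : ∀ j, j ≠ i₀ → f (b j) = b j) (k : ℕ) :
    LinearMap.trace R (⋀[R]^(k + 1) M) (map (k + 1) f) =
      (Fintype.card ι).choose (k + 1) - (1 - LinearMap.det f) * (Fintype.card ι - 1).choose k := by
  have hminor (s : Set.powersetCard ι (k + 1)) :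
      ((LinearMap.toMatrix b b f).submatrix (ofFinEmbEquiv.symm s) (ofFinEmbEquiv.symm s)).det =
        if i₀ ∈ (s : Finset ι) then LinearMap.det f else 1 := by
    rw [LinearMap.toMatrix_eq_updateCol_one b hf, Matrix.det_submatrix_updateCol_one
      (ofFinEmbEquiv.symm s).injective, ← LinearMap.det_eq_repr_of_forall_ne_apply_eq b hf]
    exact if_congr (mem_range_ofFinEmbEquiv_symm_iff_mem s i₀) rfl rfl
  have hsplit := card_filter_add_card_filter_not
    (s := powersetCard (k + 1) (univ : Finset ι)) (i₀ ∈ ·)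
  rw [card_powersetCard, card_univ, card_filter_mem_powersetCard_succ] at hsplit
  rw [trace_map_eq_sum_det_submatrix b, Fintype.sum_congr _ _ hminor,
    ← sum_subtype (powersetCard (k + 1) univ) (fun s => by rw [mem_powersetCard_univ]; rfl)
      (fun s => if i₀ ∈ s then LinearMap.det f else 1),
    sum_ite, sum_const, sum_const, card_filter_mem_powersetCard_succ,
    nsmul_eq_mul, nsmul_eq_mul, mul_one, ← hsplit]
  push_cast
  ring

end Basis

theorem exteriorPower.trace_map_zero {R M : Type*} [CommRing R] [Nontrivial R] [AddCommGroup M]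
    [Module R M] [Module.Free R M] [Module.Finite R M] (f : M →ₗ[R] M) :
    LinearMap.trace R (⋀[R]^0 M) (map 0 f) = 1 := by
  have hid : map 0 f = LinearMap.id := LinearMap.ext fun x =>
    (zeroEquiv R M).injective (LinearMap.congr_fun (zeroEquiv_naturality f) x)
  rw [hid, LinearMap.trace_id, finrank_eq, Nat.choose_zero_right, Nat.cast_one]

theorem LinearMap.mem_ker_sub_id {R M : Type*} [Ring R] [AddCommGroup M] [Module R M]
    {f : M →ₗ[R] M} {x : M} : x ∈ ker (f - LinearMap.id) ↔ f x = x := by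
  rw [mem_ker, sub_apply, id_apply, sub_eq_zero]

section Hyperplane

variable {K V : Type*} [Field K] [AddCommGroup V] [Module K V] [FiniteDimensional K V]

theorem Submodule.exists_basis_succ_mem {H : Submodule K V}
    (hH : finrank K H + 1 = finrank K V) :
    ∃ b : Basis (Fin (finrank K H + 1)) K V, ∀ i : Fin (finrank K H), b i.succ ∈ H := by
  have hlt : H < ⊤ := lt_top_iff_ne_top.mpr fun h => by rw [h, finrank_top] at hH; omega
  obtain ⟨y, -, hy⟩ := SetLike.exists_of_lt hlt
  have hsup : H ⊔ (K ∙ y) = ⊤ := by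
    refine Submodule.eq_top_of_finrank_eq (le_antisymm (Submodule.finrank_le _) ?_)
    rw [← hH]
    exact Submodule.finrank_lt_finrank_of_lt (SetLike.lt_iff_le_and_exists.mpr
      ⟨le_sup_left, y, Submodule.mem_sup_right (Submodule.mem_span_singleton_self y), hy⟩)
  refine ⟨Basis.mkFinCons y (finBasis K H) (fun c x hx hcx => ?_) (fun z => ?_), fun i => ?_⟩
  · by_contra hc
    refine hy ?_
    rw [← smul_mem_iff H hc, eq_neg_of_add_eq_zero_left hcx]
    exact H.neg_mem hx
  · obtain ⟨x, hx, v, hv, rfl⟩ := Submodule.mem_sup.mp (hsup ▸ Submodule.mem_top : z ∈ H ⊔ (K ∙ y))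
    obtain ⟨a, rfl⟩ := Submodule.mem_span_singleton.mp hv
    exact ⟨-a, by simpa using hx⟩
  · simp

theorem LinearMap.eq_one_of_det_eq_one_of_pow_eq_one [CharZero K] {H : Submodule K V}
    (hH : finrank K H + 1 = finrank K V) {f : V →ₗ[K] V} (hfix : ∀ x ∈ H, f x = x)
    (hdet : LinearMap.det f = 1) {m : ℕ} (hm : m ≠ 0) (hfm : f ^ m = 1) : f = 1 := by
  obtain ⟨b, hb⟩ := H.exists_basis_succ_mem hH
  have hf : ∀ j, j ≠ 0 → f (b j) = b j := fun j hj => by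
    obtain ⟨i, rfl⟩ := Fin.exists_succ_eq.mpr hj
    exact hfix _ (hb i)
  set w := f (b 0) - b 0
  have hw : w ∈ H := by
    have hrepr := b.sum_repr (f (b 0))
    rw [Fin.sum_univ_succ, ← det_eq_repr_of_forall_ne_apply_eq b hf, hdet, one_smul] at hrepr
    rw [show w = ∑ i : Fin (finrank K H), b.repr (f (b 0)) i.succ • b i.succ from
      sub_eq_iff_eq_add'.mpr hrepr.symm]
    exact H.sum_mem fun i _ => H.smul_mem _ (hb i)
  have hpow (p : ℕ) : (f ^ p) (b 0) = b 0 + (p : K) • w := by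
    induction p with
    | zero => simp
    | succ p ih =>
      rw [pow_succ', Module.End.mul_apply, ih, map_add, map_smul, hfix w hw]
      simp only [w, Nat.cast_succ]
      module
  have hw0 : w = 0 := by
    have := hpow m
    rw [hfm, Module.End.one_apply, left_eq_add, smul_eq_zero] at this
    exact this.resolve_left (Nat.cast_ne_zero.mpr hm)
  refine b.ext fun j => ?_
  rcases eq_or_ne j 0 with rfl | hj
  · exact sub_eq_zero.mp hw0
  · exact hf j hj

theorem LinearMap.ker_sub_id_eq_iff {H : Submodule K V} (hH : finrank K H + 1 = finrank K V)
    {f : V →ₗ[K] V} : ker (f - LinearMap.id) = H ↔ f ≠ 1 ∧ ∀ x ∈ H, f x = x := by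
  constructor
  · rintro rfl
    refine ⟨fun hf => ?_, fun x => mem_ker_sub_id.mp⟩
    rw [hf, Module.End.one_eq_id, sub_self, ker_zero, finrank_top] at hH
    omega
  · rintro ⟨hf, hfix⟩
    have hle : H ≤ ker (f - LinearMap.id) := fun x hx => mem_ker_sub_id.mpr (hfix x hx)
    have := Submodule.finrank_lt (s := ker (f - LinearMap.id)) fun htop =>
      hf (LinearMap.ext fun x => mem_ker_sub_id.mp (htop ▸ Submodule.mem_top))
    exact (Submodule.eq_of_le_of_finrank_le hle (by omega)).symm

end Hyperplane

theorem Subgroup.finsum_det_eq_zero {K V : Type*} [Field K] [AddCommGroup V] [Module K V]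
    {G : Subgroup (V →ₗ[K] V)ˣ} (hG : (G : Set (V →ₗ[K] V)ˣ).Finite) {g : (V →ₗ[K] V)ˣ}
    (hg : g ∈ G) (hdet : LinearMap.det (g : V →ₗ[K] V) ≠ 1) :
    ∑ᶠ x ∈ (G : Set (V →ₗ[K] V)ˣ), LinearMap.det (x : V →ₗ[K] V) = 0 := by
  have := hG.fintype
  let χ : G →* K := LinearMap.det.comp ((Units.coeHom _).comp G.subtype)
  have hχ : χ ≠ 1 := fun h => hdet (DFunLike.congr_fun h ⟨g, hg⟩)
  rw [← finsum_set_coe_eq_finsum_mem, finsum_eq_sum_of_fintype]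
  exact sum_hom_units_eq_zero χ hχ

namespace CD

variable {V : Type*} [AddCommGroup V] [Module ℂ V]

theorem extMap_eq_map (k : ℕ) (f : V →ₗ[ℂ] V) : extMap k f = exteriorPower.map k f := by
  ext v
  simp [extMap, ExteriorAlgebra.map_apply_ιMulti, Function.comp_def]

theorem IsReflection.ne_one {τ : (V →ₗ[ℂ] V)ˣ} (hτ : IsReflection τ) :
    (τ : V →ₗ[ℂ] V) ≠ 1 := fun h => by
  rw [IsReflection, h, Module.End.one_eq_id, sub_self, LinearMap.ker_zero, finrank_top] at hτ
  omega

section FiniteDimensional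

variable [FiniteDimensional ℂ V]

theorem trace_extMap_succ_of_isReflection {τ : (V →ₗ[ℂ] V)ˣ} (hτ : IsReflection τ) (k : ℕ) :
    LinearMap.trace ℂ (⋀[ℂ]^(k + 1) V) (extMap (k + 1) τ) =
      (finrank ℂ V).choose (k + 1) -
        (1 - LinearMap.det (τ : V →ₗ[ℂ] V)) * (finrank ℂ V - 1).choose k := by
  obtain ⟨b, hb⟩ := Submodule.exists_basis_succ_mem hτ.symm
  have hfix : ∀ j, j ≠ 0 → (τ : V →ₗ[ℂ] V) (b j) = b j := fun j hj => by
    obtain ⟨i, rfl⟩ := Fin.exists_succ_eq.mpr hj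
    exact LinearMap.mem_ker_sub_id.mp (hb i)
  rw [extMap_eq_map, exteriorPower.trace_map_succ_of_forall_ne_apply_eq b hfix, Fintype.card_fin,
    ← hτ]

theorem det_ne_one_of_mem_reflections {W : Subgroup (V →ₗ[ℂ] V)ˣ}
    (hW : (W : Set (V →ₗ[ℂ] V)ˣ).Finite) {τ : (V →ₗ[ℂ] V)ˣ} (hτ : τ ∈ reflections W) :
    LinearMap.det (τ : V →ₗ[ℂ] V) ≠ 1 := fun hdet => by
  have := hW.to_subtype
  have hord : 0 < orderOf τ := by
    simpa using (isOfFinOrder_of_finite (⟨τ, hτ.1⟩ : W)).orderOf_pos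
  refine hτ.2.ne_one (LinearMap.eq_one_of_det_eq_one_of_pow_eq_one hτ.2.symm
    (fun x => LinearMap.mem_ker_sub_id.mp) hdet hord.ne' ?_)
  rw [← Units.val_pow_eq_pow_val, pow_orderOf_eq_one, Units.val_one]

theorem setOf_mem_reflections_ker_eq {W : Subgroup (V →ₗ[ℂ] V)ˣ} {τ₀ : (V →ₗ[ℂ] V)ˣ}
    (hτ₀ : IsReflection τ₀) :
    {τ ∈ reflections W | LinearMap.ker ((τ : V →ₗ[ℂ] V) - LinearMap.id) =
        LinearMap.ker ((τ₀ : V →ₗ[ℂ] V) - LinearMap.id)} =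
      (parabolic W (LinearMap.ker ((τ₀ : V →ₗ[ℂ] V) - LinearMap.id)) : Set (V →ₗ[ℂ] V)ˣ) \ {1} := by
  have hH := hτ₀.symm
  ext τ
  constructor
  · rintro ⟨⟨hτW, -⟩, hker⟩
    obtain ⟨hne, hfix⟩ := (LinearMap.ker_sub_id_eq_iff hH).mp hker
    exact ⟨⟨hτW, hfix⟩, fun h => hne (by rw [h, Units.val_one])⟩
  · rintro ⟨⟨hτW, hfix⟩, hne⟩
    have hker := (LinearMap.ker_sub_id_eq_iff hH).mpr ⟨fun h => hne (Units.ext h), hfix⟩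
    exact ⟨⟨hτW, by rw [IsReflection, hker]; exact hτ₀⟩, hker⟩

theorem finsum_det_setOf_mem_reflections_ker_eq {W : Subgroup (V →ₗ[ℂ] V)ˣ}
    (hW : (W : Set (V →ₗ[ℂ] V)ˣ).Finite) {τ₀ : (V →ₗ[ℂ] V)ˣ} (hτ₀ : τ₀ ∈ reflections W) :
    ∑ᶠ τ ∈ {τ ∈ reflections W | LinearMap.ker ((τ : V →ₗ[ℂ] V) - LinearMap.id) =
        LinearMap.ker ((τ₀ : V →ₗ[ℂ] V) - LinearMap.id)}, LinearMap.det (τ : V →ₗ[ℂ] V) = -1 := by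
  set G := parabolic W (LinearMap.ker ((τ₀ : V →ₗ[ℂ] V) - LinearMap.id))
  have hG : (G : Set (V →ₗ[ℂ] V)ˣ).Finite := hW.subset fun g hg => hg.1
  have hsum := G.finsum_det_eq_zero hG (g := τ₀) ⟨hτ₀.1, fun x => LinearMap.mem_ker_sub_id.mp⟩
    (det_ne_one_of_mem_reflections hW hτ₀)
  rw [← Set.insert_sdiff_self_of_mem G.one_mem,
    finsum_mem_insert _ (Set.notMem_sdiff_of_mem (Set.mem_singleton 1)) hG.sdiff,
    Units.val_one, map_one] at hsum
  rw [setOf_mem_reflections_ker_eq hτ₀.2]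
  linear_combination hsum

theorem finsum_det_reflections {W : Subgroup (V →ₗ[ℂ] V)ˣ}
    (hW : (W : Set (V →ₗ[ℂ] V)ˣ).Finite) :
    ∑ᶠ τ ∈ reflections W, LinearMap.det (τ : V →ₗ[ℂ] V) = -((hyperplanes W).ncard : ℂ) := by
  have hR : (reflections W).Finite := hW.subset fun τ hτ => hτ.1
  have hH : (hyperplanes W).Finite := hR.image _
  set fiber := fun H : Submodule ℂ V =>
    {τ ∈ reflections W | LinearMap.ker ((τ : V →ₗ[ℂ] V) - LinearMap.id) = H}
  have hunion : reflections W = ⋃ H ∈ hyperplanes W, fiber H := by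
    ext τ
    simp only [fiber, Set.mem_iUnion]
    exact ⟨fun h => ⟨_, ⟨τ, h, rfl⟩, h, rfl⟩, fun ⟨_, _, h, _⟩ => h⟩
  have hdisj : (hyperplanes W).PairwiseDisjoint fiber := fun H₁ _ H₂ _ hne =>
    Set.disjoint_left.mpr fun τ h₁ h₂ => hne (h₁.2.symm.trans h₂.2)
  have hfiber : ∀ H ∈ hyperplanes W, ∑ᶠ τ ∈ fiber H, LinearMap.det (τ : V →ₗ[ℂ] V) = -1 := by
    rintro H ⟨τ₀, hτ₀, rfl⟩
    exact finsum_det_setOf_mem_reflections_ker_eq hW hτ₀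
  rw [hunion, finsum_mem_biUnion hdisj hH fun H _ => hR.subset (Set.sep_subset _ _),
    finsum_mem_congr rfl hfiber, finsum_mem_neg_distrib (fun _ => (1 : ℂ)) hH, ← finsum_one,
    Nat.cast_finsum_mem hH, Nat.cast_one]

theorem ncard_mul_choose_sub_finsum_trace_extMap {W : Subgroup (V →ₗ[ℂ] V)ˣ}
    (hW : (W : Set (V →ₗ[ℂ] V)ˣ).Finite) (k : ℕ) :
    ((reflections W).ncard : ℂ) * (finrank ℂ V).choose (k + 1) -
        ∑ᶠ τ ∈ reflections W, LinearMap.trace ℂ (⋀[ℂ]^(k + 1) V) (extMap (k + 1) τ) =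
      ((reflections W).ncard + (hyperplanes W).ncard) * (finrank ℂ V - 1).choose k := by
  have hR : (reflections W).Finite := hW.subset fun τ hτ => hτ.1
  have hdet := finsum_det_reflections hW
  rw [← hR.coe_toFinset, finsum_mem_coe_finset] at hdet ⊢
  rw [Set.ncard_coe_finset, Finset.sum_congr rfl fun τ hτ =>
      trace_extMap_succ_of_isReflection (hR.mem_toFinset.mp hτ).2 k,
    Finset.sum_sub_distrib, Finset.sum_const, ← Finset.sum_mul, Finset.sum_sub_distrib,
    Finset.sum_const, hdet]
  simp only [nsmul_eq_mul]
  ring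

end FiniteDimensional

theorem coxeter_number_of_exterior_power_general
    [FiniteDimensional ℂ V] (n : ℕ) (hn : Module.finrank ℂ V = n)
    (W : Subgroup (V →ₗ[ℂ] V)ˣ)
    (hW : IsReflectionGroup W)
    (h : ℕ) (hh : h * n = (reflections W).ncard + (hyperplanes W).ncard)
    (k : ℕ) :
    ((reflections W).ncard : ℂ) * (Nat.choose n k : ℂ)
        - (∑ᶠ τ ∈ reflections W,
            LinearMap.trace ℂ (⋀[ℂ]^k V) (extMap k (τ : (V →ₗ[ℂ] V)ˣ)))
      = (h : ℂ) * (k : ℂ) * (Nat.choose n k : ℂ) := by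
  subst hn
  cases k with
  | zero =>
    have hR : (reflections W).Finite := hW.1.subset fun τ hτ => hτ.1
    simp only [extMap_eq_map, exteriorPower.trace_map_zero, Nat.choose_zero_right, Nat.cast_one,
      mul_one, Nat.cast_zero, mul_zero]
    rw [← finsum_one, Nat.cast_finsum_mem hR, Nat.cast_one, sub_self]
  | succ k =>
    have hhC : (h : ℂ) * finrank ℂ V = (reflections W).ncard + (hyperplanes W).ncard := by
      exact_mod_cast hh
    have hchoose : (finrank ℂ V : ℂ) * (finrank ℂ V - 1).choose k =
        (finrank ℂ V).choose (k + 1) * (k + 1) := by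
      exact_mod_cast Nat.mul_choose_sub_one _ k
    rw [ncard_mul_choose_sub_finsum_trace_extMap hW.1, ← hhC]
    push_cast
    linear_combination (h : ℂ) * hchoose

/-- For a nontrivial irreducible complex reflection group `W` of
rank `n` with Coxeter number `h`, the generalized Coxeter number of the character
of `⋀ᵏV` equals `hk`:  `|R|·C(n,k) − ∑_{τ∈R} Tr(⋀ᵏτ) = h·k·C(n,k)`. -/
theorem coxeter_number_of_exterior_power
    [FiniteDimensional ℂ V] (n : ℕ) (hn : Module.finrank ℂ V = n)
    (W : Subgroup (V →ₗ[ℂ] V)ˣ)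
    (hW : IsReflectionGroup W) (hnontrivial : W ≠ ⊥) (hirr : IsIrreducible W)
    (h : ℕ) (hh : h * n = (reflections W).ncard + (hyperplanes W).ncard)
    (k : ℕ) (hk : k ≤ n) :
    ((reflections W).ncard : ℂ) * (Nat.choose n k : ℂ)
        - (∑ᶠ τ ∈ reflections W,
            LinearMap.trace ℂ (⋀[ℂ]^k V) (extMap k (τ : (V →ₗ[ℂ] V)ˣ)))
      = (h : ℂ) * (k : ℂ) * (Nat.choose n k : ℂ) :=
  coxeter_number_of_exterior_power_general n hn W hW h hh k

end CD
end
end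

section
/- Let G be a group and ρ : G → GL(U) a representation on a finite-dimensional complex vector space U. Suppose g ∈ G acts on U as a semisimple pseudo-reflection: there exist a hyperplane H ⊆ U fixed pointwise by ρ(g), a vector x ∉ H, and a scalar α ∈ ℂ with ρ(g)x = αx. Then the element 1 − g of the group algebra ℂ[G] is Lie-like for U: for every k ≥ 1 and all v₁,…,v_k ∈ U, one has v₁∧v₂∧⋯∧v_k − (ρ(g)v₁)∧(ρ(g)v₂)∧⋯∧(ρ(g)v_k) = Σ_{i=1}^{k} v₁∧⋯∧(vᵢ − ρ(g)vᵢ)∧⋯∧v_k in the exterior power Λ^kU. -/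
open scoped BigOperators

noncomputable section

/-- Multilinear expansion of an alternating map along subtracting multiples of a
fixed vector `x`: terms with two `x`'s vanish, so only single substitutions survive. -/
lemma expand_alt {k : ℕ} {U V : Type*} [AddCommGroup U] [Module ℂ U]
    [AddCommGroup V] [Module ℂ V]
    (f : U [⋀^Fin k]→ₗ[ℂ] V) (x : U) (d : Fin k → ℂ) (s : Finset (Fin k)) :
    ∀ v : Fin k → U, f (fun i => if i ∈ s then v i - d i • x else v i)
      = f v - ∑ i ∈ s, d i • f (Function.update v i x) := by
  induction s using Finset.induction with
  | empty => intro v; simp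
  | @insert j s hj ih =>
    intro v
    have h1 : (fun i => if i ∈ insert j s then v i - d i • x else v i)
        = Function.update (fun i => if i ∈ s then v i - d i • x else v i) j (v j - d j • x) := by
      funext i
      rcases eq_or_ne i j with rfl | hij
      · simp [Function.update_self, hj]
      · simp [Function.update_of_ne hij, Finset.mem_insert, hij]
    have h2 : Function.update (fun i => if i ∈ s then v i - d i • x else v i) j (v j)
        = (fun i => if i ∈ s then v i - d i • x else v i) := by
      funext i
      rcases eq_or_ne i j with rfl | hij
      · simp [Function.update_self, hj]
      · simp [Function.update_of_ne hij]
    have h3 : Function.update (fun i => if i ∈ s then v i - d i • x else v i) j x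
        = (fun i => if i ∈ s then (Function.update v j x) i - d i • x
            else (Function.update v j x) i) := by
      funext i
      rcases eq_or_ne i j with rfl | hij
      · simp [Function.update_self, hj]
      · simp [Function.update_of_ne hij]
    rw [h1, AlternatingMap.map_update_sub, AlternatingMap.map_update_smul, h2, ih, h3,
      ih (Function.update v j x)]
    have h4 : ∀ i ∈ s, d i • f (Function.update (Function.update v j x) i x) = 0 := by
      intro i hi
      have hij : i ≠ j := fun h => hj (h ▸ hi)
      have : f (Function.update (Function.update v j x) i x) = 0 := by
        apply AlternatingMap.map_eq_zero_of_eq _ _ _ hij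
        rw [Function.update_self, Function.update_of_ne hij.symm, Function.update_self]
      rw [this, smul_zero]
    rw [Finset.sum_congr rfl h4, Finset.sum_const_zero, sub_zero,
      Finset.sum_insert hj]
    abel

/-- If `g ∈ G` acts on a finite-dimensional complex
representation `U` as a semisimple pseudo-reflection (it fixes a hyperplane `H`
pointwise and scales some vector `x ∉ H`), then `1 − g` is a Lie-like element for
`U`: for every `k ≥ 1` and all `v₁,…,v_k ∈ U`,
`v₁∧⋯∧v_k − (g v₁)∧⋯∧(g v_k) = ∑ᵢ v₁∧⋯∧(vᵢ − g vᵢ)∧⋯∧v_k`. -/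
theorem pseudo_reflection_is_lie_like
    {G : Type*} [Group G] {U : Type*} [AddCommGroup U] [Module ℂ U]
    [FiniteDimensional ℂ U]
    (ρ : Representation ℂ G U) (g : G)
    (H : Submodule ℂ U)
    (hH : Module.finrank ℂ U = Module.finrank ℂ H + 1)
    (hfix : ∀ y ∈ H, ρ g y = y)
    (x : U) (hx : x ∉ H) (α : ℂ) (hα : ρ g x = α • x)
    (k : ℕ) (hk : 1 ≤ k) (v : Fin k → U) :
    ExteriorAlgebra.ιMulti ℂ k v - ExteriorAlgebra.ιMulti ℂ k (fun i => ρ g (v i))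
      = ∑ i : Fin k,
          ExteriorAlgebra.ιMulti ℂ k (Function.update v i (v i - ρ g (v i))) := by
  classical
  -- `H ⊔ span x = ⊤`
  have hxK : x ∈ H ⊔ Submodule.span ℂ {x} :=
    Submodule.mem_sup_right (Submodule.mem_span_singleton_self x)
  have hlt : H < H ⊔ Submodule.span ℂ {x} :=
    lt_of_le_of_ne le_sup_left (fun h => hx (h ▸ hxK))
  have htop : H ⊔ Submodule.span ℂ {x} = ⊤ := by
    apply Submodule.eq_top_of_finrank_eq
    have h1 : Module.finrank ℂ H < Module.finrank ℂ (H ⊔ Submodule.span ℂ {x} : Submodule ℂ U) :=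
      Submodule.finrank_lt_finrank_of_lt hlt
    have h2 : Module.finrank ℂ (H ⊔ Submodule.span ℂ {x} : Submodule ℂ U) ≤ Module.finrank ℂ U :=
      Submodule.finrank_le _
    omega
  -- find `d i` with `v i - ρ g (v i) = d i • x`
  have hd : ∀ i : Fin k, ∃ d : ℂ, v i - ρ g (v i) = d • x := by
    intro i
    have : v i ∈ H ⊔ Submodule.span ℂ {x} := htop ▸ Submodule.mem_top
    obtain ⟨y, hy, z, hz, hyz⟩ := Submodule.mem_sup.mp this
    obtain ⟨c, rfl⟩ := Submodule.mem_span_singleton.mp hz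
    refine ⟨c * (1 - α), ?_⟩
    rw [← hyz, map_add, hfix y hy, map_smul, hα]
    simp only [smul_smul]
    rw [mul_sub, mul_one]
    module
  choose d hdspec using hd
  have key := expand_alt (ExteriorAlgebra.ιMulti ℂ k) x d Finset.univ v
  have hgv : (fun i => ρ g (v i)) = fun i => if i ∈ Finset.univ then v i - d i • x else v i := by
    funext i
    simp only [Finset.mem_univ, if_true]
    rw [← hdspec i]
    abel
  rw [hgv, key, sub_sub_cancel]
  apply Finset.sum_congr rfl
  intro i _
  rw [hdspec i, AlternatingMap.map_update_smul]
end
end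

section
/- (Matrix-Forest theorem for sums of rank-one operators) Let V be an n-dimensional complex inner product space, let r₁,…,r_N ∈ V, let ω₁,…,ω_N ∈ ℂ, and define L ∈ End(V) by L(v) := Σ_{i=1}^{N} ωᵢ·⟨v, rᵢ⟩·rᵢ. Then, as polynomials in x: det(x·id_V + L) = Σ_{k=0}^{n} x^{n−k} · Σ_{1 ≤ i₁ < i₂ < ⋯ < i_k ≤ N} ω_{i₁}ω_{i₂}⋯ω_{i_k} · det(⟨r_{i_s}, r_{i_t}⟩)_{s,t=1}^{k}. (The Gram determinant det(⟨r_{i_s}, r_{i_t}⟩) vanishes when {r_{i₁},…,r_{i_k}} is linearly dependent, so the inner sum may equivalently be taken over linearly independent k-element subsets.) -/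
/-!
Write `L = f ∘ g` with `f c = ∑ cᵢ rᵢ` and `g v = (ωᵢ ⟨v, rᵢ⟩)ᵢ`. The coefficient of `x^{n-k}` in
`det (x + M)` is the sum of the `k × k` principal minors of `M`, and for rectangular `A`, `B` these
sums agree for `AB` and `BA`, being the coefficients of `det (1 + X • AB) = det (1 + X • BA)`.
So the matrix of `f ∘ g` on `V` may be traded for the `N × N` matrix of `g ∘ f`, which is
`(ωᵢ ⟨rⱼ, rᵢ⟩)ᵢⱼ`; its principal minors are the weighted Gram determinants.
-/

open Finset Polynomial Matrix

namespace Matrix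

variable {ι κ R : Type*} [Fintype ι] [DecidableEq ι] [Fintype κ] [DecidableEq κ] [CommRing R]

theorem det_smul_one_add_eq_sum_minors (M : Matrix ι ι R) (x : R) :
    det (x • 1 + M) = ∑ k ∈ range (Fintype.card ι + 1), x ^ (Fintype.card ι - k) *
      ∑ s ∈ univ.powersetCard k, det (M.submatrix (Subtype.val : s → ι) Subtype.val) := by
  nontriviality R
  have h_eval : det (x • 1 + M) = (-M).charpoly.eval x := by
    rw [eval_charpoly, sub_neg_eq_add, scalar_apply, smul_one_eq_diagonal]
  rw [h_eval, eval_eq_sum_range' (Nat.lt_succ_of_le (charpoly_natDegree_eq_dim _).le),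
    ← sum_range_reflect]
  refine sum_congr rfl fun k hk => ?_
  have hk : k ≤ Fintype.card ι := Nat.lt_succ_iff.mp (mem_range.mp hk)
  rw [Nat.succ_sub_one, charpoly_coeff_eq_sum_minors _ _ hk, mul_comm, mul_sum]
  refine congrArg _ (sum_congr rfl fun s hs => ?_)
  rw [submatrix_neg, Pi.neg_apply, Pi.neg_apply, det_neg, Fintype.card_coe,
    (mem_powersetCard.mp hs).2, ← mul_assoc, ← mul_pow, neg_one_mul, neg_neg, one_pow, one_mul]

theorem sum_det_submatrix_mul_comm (A : Matrix ι κ R) (B : Matrix κ ι R) (k : ℕ) :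
    ∑ s ∈ univ.powersetCard k, det ((A * B).submatrix (Subtype.val : s → ι) Subtype.val) =
      ∑ t ∈ univ.powersetCard k, det ((B * A).submatrix (Subtype.val : t → κ) Subtype.val) := by
  rw [← coeff_det_one_add_X_smul_eq_sum_minors, ← coeff_det_one_add_X_smul_eq_sum_minors,
    Matrix.map_mul, Matrix.map_mul, ← Matrix.smul_mul, det_one_add_mul_comm, Matrix.mul_smul]

end Matrix

theorem LinearMap.det_smul_id_add_comp {R M ι : Type*} [CommRing R]
    [AddCommGroup M] [Module R M] [Module.Free R M] [Module.Finite R M]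
    [Fintype ι] [DecidableEq ι] (f : (ι → R) →ₗ[R] M) (g : M →ₗ[R] ι → R) (x : R) :
    LinearMap.det (x • id + f ∘ₗ g) =
      ∑ k ∈ Finset.range (Module.finrank R M + 1), x ^ (Module.finrank R M - k) *
        ∑ s ∈ univ.powersetCard k,
          Matrix.det ((toMatrix' (g ∘ₗ f)).submatrix (Subtype.val : s → ι) Subtype.val) := by
  nontriviality R
  set b := Module.finBasis R M
  rw [← det_toMatrix b, map_add, map_smul, toMatrix_id, toMatrix_comp b (Pi.basisFun R ι) b,
    Matrix.det_smul_one_add_eq_sum_minors, Fintype.card_fin]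
  refine sum_congr rfl fun k _ => congrArg _ ?_
  rw [Matrix.sum_det_submatrix_mul_comm, ← toMatrix_comp, toMatrix_eq_toMatrix']

/-- abstract Matrix-Forest theorem for sums of rank-one
operators. For vectors `r₁,…,r_N` in an `n`-dimensional complex inner product
space and weights `ω₁,…,ω_N`, the characteristic polynomial of
`L(v) = ∑ᵢ ωᵢ ⟨v, rᵢ⟩ rᵢ` is computed by Gram determinants:
`det(x·id + L) = ∑_k x^{n-k} ∑_{i₁<⋯<i_k} ω_{i₁}⋯ω_{i_k} det(⟨r_{i_s}, r_{i_t}⟩)`.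
Here `⟨·,·⟩` is linear in its first argument, i.e. `⟨v, r⟩ = inner r v` in
Mathlib's convention. -/
theorem matrix_forest_rank_one
    {V : Type*} [NormedAddCommGroup V] [InnerProductSpace ℂ V]
    [FiniteDimensional ℂ V]
    (n : ℕ) (hn : Module.finrank ℂ V = n)
    (N : ℕ) (r : Fin N → V) (ω : Fin N → ℂ)
    (L : V →ₗ[ℂ] V)
    (hL : ∀ v : V, L v = ∑ i : Fin N, ω i • ((inner ℂ (r i) v : ℂ) • r i))
    (x : ℂ) :
    LinearMap.det (x • (LinearMap.id : V →ₗ[ℂ] V) + L)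
      = ∑ k ∈ Finset.range (n + 1), x ^ (n - k) *
          ∑ s ∈ Finset.univ.powersetCard k,
            (∏ i ∈ s, ω i) *
              Matrix.det (Matrix.of fun a b : ↥s => (inner ℂ (r (b : Fin N)) (r (a : Fin N)) : ℂ)) := by
  set f : (Fin N → ℂ) →ₗ[ℂ] V := Fintype.linearCombination ℂ r
  set g : V →ₗ[ℂ] Fin N → ℂ := LinearMap.pi fun i => ω i • innerₛₗ ℂ (r i)
  have hL_eq : L = f ∘ₗ g := LinearMap.ext fun v => by
    simp [hL, f, g, Fintype.linearCombination_apply, smul_smul]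
  have h_gram : LinearMap.toMatrix' (g ∘ₗ f) = of fun i j => ω i * inner ℂ (r i) (r j) := by
    ext i j
    simp [f, g, LinearMap.toMatrix'_apply, Fintype.linearCombination_apply, Pi.single_apply]
  rw [hL_eq, LinearMap.det_smul_id_add_comp, hn, h_gram]
  refine sum_congr rfl fun k _ => congrArg _ (sum_congr rfl fun s _ => ?_)
  rw [← det_transpose, ← prod_coe_sort, ← det_mul_row]
  rfl
end

section
/- Let r ≥ 3 and let W be the dihedral group of order 2r, with elements the rotations ρ₀,…,ρ_{r−1} and the reflections t₀,…,t_{r−1}, multiplication satisfying tᵢtⱼ = ρ_{i−j} and ρᵢtⱼ = t_{i+j} (indices modulo r). The reflections of W are exactly t₀,…,t_{r−1} and its Coxeter elements are the two rotations ρ₁ and ρ_{−1}. Let ω₀, ω₁ ∈ ℂ and define the weight w(t₀) := ω₀ and w(tᵢ) := ω₁ for i ≠ 0 (the weight system of the parabolic tower {1} ≤ {1, t₀} ≤ W). Then for every integer ℓ ≥ 0: Σ w(τ₁)·w(τ₂)⋯w(τ_ℓ), summed over all tuples (τ₁,…,τ_ℓ, c) with each τⱼ a reflection, c ∈ {ρ₁,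 ρ_{−1}}, and τ₁τ₂⋯τ_ℓ = c, equals (1/r)·(1 + (−1)^ℓ)·((ω₀ + (r−1)ω₁)^ℓ − (ω₀ − ω₁)^ℓ). (This is the coefficientwise form of the identity F(t) = (1/r)·e^{t(ω₀+(r−1)ω₁)}·(1 − e^{−trω₁})·(1 − e^{−t(2ω₀+(r−2)ω₁)}), i.e. the main product formula for the dihedral groups I₂(r) = G(r,r,2).) -/
open scoped BigOperators

noncomputable section

open DihedralGroup

/-!
A product `sr i₀ * sr i₁ * ⋯ * sr i_{ℓ-1}` of reflections is a reflection when `ℓ` is odd, and the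
rotation `r (-(i₀ - i₁ + i₂ - ⋯))` when `ℓ` is even. Negating every second index preserves the
weights (`w (sr (-i)) = w (sr i)`) and turns the alternating sum into a plain sum, so the weighted
count of factorizations of `r a` is the `ℓ`-fold convolution power of `(ω₀ - ω₁) δ₀ + ω₁` on
`ZMod r`, evaluated at `-a`. Convolving with the constant `ω₁` only multiplies by the total mass, so
this power is `((ω₀ + (r - 1) ω₁)^ℓ - (ω₀ - ω₁)^ℓ) / r + (ω₀ - ω₁)^ℓ δ₀`; for `r ≥ 3` the Coxeter
elements `r (±1)` are distinct and not the identity, and each contributes the first term.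
-/

theorem List.alternatingSum_ofFn {G : Type*} [AddCommGroup G] {ℓ : ℕ} (i : Fin ℓ → G) :
    (List.ofFn i).alternatingSum = ∑ j : Fin ℓ, (-1 : ℤ) ^ (j : ℕ) • i j := by
  induction ℓ with
  | zero => simp
  | succ ℓ ih =>
    simp [List.ofFn_succ, List.alternatingSum_cons, ih, Fin.sum_univ_succ, pow_succ, sub_eq_add_neg]

section ConvolutionPower

variable {G R : Type*} [AddCommGroup G] [DecidableEq G]

/-- The weight `w(tᵢ)` of the tower `{1} ≤ {1, t₀} ≤ W`, with `tᵢ = sr i`. -/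
def towerWeight (ω₀ ω₁ : R) (x : G) : R := if x = 0 then ω₀ else ω₁

theorem towerWeight_eq [Ring R] (ω₀ ω₁ : R) (x : G) :
    towerWeight ω₀ ω₁ x = ω₁ + if x = 0 then ω₀ - ω₁ else 0 := by
  by_cases hx : x = 0 <;> simp [towerWeight, hx]

theorem towerWeight_neg (ω₀ ω₁ : R) (x : G) : towerWeight ω₀ ω₁ (-x) = towerWeight ω₀ ω₁ x := by
  simp [towerWeight]

variable [Fintype G]

theorem sum_towerWeight [CommRing R] (ω₀ ω₁ : R) :
    ∑ x : G, towerWeight ω₀ ω₁ x = ω₀ + (Fintype.card G - 1) * ω₁ := by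
  simp only [towerWeight_eq, Finset.sum_add_distrib, Finset.sum_const, Finset.card_univ,
    nsmul_eq_mul, Finset.sum_ite_eq', Finset.mem_univ, if_true]
  ring

def convPow [CommSemiring R] (f : G → R) (ℓ : ℕ) (s : G) : R :=
  ∑ i : Fin ℓ → G with ∑ j, i j = s, ∏ j, f (i j)

theorem convPow_zero [CommSemiring R] (f : G → R) (s : G) :
    convPow f 0 s = if s = 0 then 1 else 0 := by
  by_cases hs : s = 0 <;> simp [convPow, hs, eq_comm]

theorem convPow_succ [CommSemiring R] (f : G → R) (ℓ : ℕ) (s : G) :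
    convPow f (ℓ + 1) s = ∑ x, f x * convPow f ℓ (s - x) := by
  simp only [convPow, Finset.sum_filter, Finset.mul_sum, mul_ite, mul_zero]
  rw [← (Fin.consEquiv fun _ => G).sum_comp, Fintype.sum_prod_type]
  refine Fintype.sum_congr _ _ fun x => Fintype.sum_congr _ _ fun i => ?_
  simp [Fin.consEquiv, Fin.sum_univ_succ, Fin.prod_univ_succ, eq_sub_iff_add_eq']

theorem convPow_towerWeight [Field R] [CharZero R] (ω₀ ω₁ : R) (ℓ : ℕ) (s : G) :
    convPow (towerWeight ω₀ ω₁) ℓ s =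
      ((ω₀ + (Fintype.card G - 1) * ω₁) ^ ℓ - (ω₀ - ω₁) ^ ℓ) / Fintype.card G +
        if s = 0 then (ω₀ - ω₁) ^ ℓ else 0 := by
  have hG : (Fintype.card G : R) ≠ 0 := by simp
  induction ℓ generalizing s with
  | zero => simp [convPow_zero]
  | succ ℓ ih =>
    simp only [convPow_succ, ih, mul_add, Finset.sum_add_distrib, ← Finset.sum_mul,
      sum_towerWeight, sub_eq_zero, mul_ite, mul_zero, Finset.sum_ite_eq, Finset.mem_univ, if_true]
    rw [towerWeight_eq]
    split_ifs <;> field_simp <;> ring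

theorem sum_prod_of_alternatingSum_eq [CommSemiring R] (f : G → R) (hf : ∀ x, f (-x) = f x)
    (ℓ : ℕ) (s : G) :
    ∑ i : Fin ℓ → G with (List.ofFn i).alternatingSum = s, ∏ j, f (i j) = convPow f ℓ s := by
  have hsign : ∀ (j : ℕ) (x : G), (-1 : ℤ) ^ j • (-1 : ℤ) ^ j • x = x := fun j x => by
    rw [smul_smul, ← mul_pow, neg_one_mul, neg_neg, one_pow, one_smul]
  let e := Function.Involutive.toPerm (fun (i : Fin ℓ → G) j => (-1 : ℤ) ^ (j : ℕ) • i j)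
    fun i => funext fun j => hsign j (i j)
  refine Finset.sum_equiv e (fun i => ?_) fun i _ => ?_
  · simp only [Finset.mem_filter, Finset.mem_univ, true_and, List.alternatingSum_ofFn]
    rfl
  · refine Finset.prod_congr rfl fun j _ => ?_
    show f (i j) = f ((-1 : ℤ) ^ (j : ℕ) • i j)
    rcases neg_one_pow_eq_or ℤ (j : ℕ) with h | h <;> simp [h, hf]

end ConvolutionPower

theorem finsum_factorizations_eq_sum {M α R : Type*} [Monoid M] [Fintype α] [AddCommMonoid R]
    {emb : α → M} (hemb : Function.Injective emb) (C : M → Prop) [DecidablePred C] {ℓ : ℕ}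
    (g : (Fin ℓ → M) → R) :
    ∑ᶠ p ∈ {p : (Fin ℓ → M) × M |
        (∀ j, ∃ a, p.1 j = emb a) ∧ C p.2 ∧ (List.ofFn p.1).prod = p.2}, g p.1 =
      ∑ i : Fin ℓ → α with C (List.ofFn fun j => emb (i j)).prod, g fun j => emb (i j) := by
  have himage : {p : (Fin ℓ → M) × M |
        (∀ j, ∃ a, p.1 j = emb a) ∧ C p.2 ∧ (List.ofFn p.1).prod = p.2} =
      (fun i : Fin ℓ → α => (fun j => emb (i j), (List.ofFn fun j => emb (i j)).prod)) ''
        ↑(Finset.univ.filter fun i : Fin ℓ → α => C (List.ofFn fun j => emb (i j)).prod) := by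
    ext ⟨p, c⟩
    simp only [Set.mem_ofPred_eq, Set.mem_image, Finset.coe_filter, Finset.mem_univ, true_and,
      Prod.mk.injEq]
    constructor
    · rintro ⟨hp, hc, rfl⟩
      choose i hi using hp
      obtain rfl : p = fun j => emb (i j) := funext hi
      exact ⟨i, hc, rfl, rfl⟩
    · rintro ⟨i, hc, rfl, rfl⟩
      exact ⟨fun j => ⟨i j, rfl⟩, hc, rfl⟩
  rw [himage, finsum_mem_image, finsum_mem_coe_finset]
  intro i _ i' _ h
  exact funext fun j => hemb (congr_fun (congr_arg Prod.fst h) j)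

namespace DihedralGroup

variable {n : ℕ}

theorem prod_map_sr (l : List (ZMod n)) :
    (l.map sr).prod =
      if Even l.length then r (-l.alternatingSum) else sr l.alternatingSum := by
  induction l with
  | nil => simp
  | cons a l ih =>
    rw [List.map_cons, List.prod_cons, ih, List.alternatingSum_cons, List.length_cons]
    by_cases hl : Even l.length
    · simp [hl, Nat.even_add_one, sub_eq_add_neg]
    · simp [hl, Nat.even_add_one]

theorem prod_ofFn_sr_ne_r {ℓ : ℕ} (hℓ : Odd ℓ) (i : Fin ℓ → ZMod n) (a : ZMod n) :
    (List.ofFn fun j => sr (i j)).prod ≠ r a := by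
  rw [List.ofFn_comp', prod_map_sr, List.length_ofFn, if_neg (Nat.not_even_iff_odd.2 hℓ)]
  exact nofun

theorem sum_prod_of_prod_ofFn_sr_eq_r [NeZero n] {R : Type*} [CommSemiring R]
    (f : ZMod n → R) (hf : ∀ x, f (-x) = f x) {ℓ : ℕ} (hℓ : Even ℓ) (a : ZMod n) :
    ∑ i : Fin ℓ → ZMod n with (List.ofFn fun j => sr (i j)).prod = r a, ∏ j, f (i j) =
      convPow f ℓ (-a) := by
  rw [← sum_prod_of_alternatingSum_eq f hf]
  refine Finset.sum_congr (Finset.filter_congr fun i _ => ?_) fun _ _ => rfl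
  rw [List.ofFn_comp', prod_map_sr, List.length_ofFn, if_pos hℓ, r.injEq, neg_eq_iff_eq_neg]

end DihedralGroup

/-- Weighted enumeration of reflection factorizations of the
Coxeter elements `ρ₁, ρ₋₁` of the dihedral group `I₂(r) = G(r,r,2)` (`r ≥ 3`),
with the weight system of the parabolic tower `{1} ≤ {1,t₀} ≤ W`: for every
`ℓ ≥ 0` the weighted number of length-`ℓ` factorizations equals
`(1/r)·(1+(−1)^ℓ)·((ω₀+(r−1)ω₁)^ℓ − (ω₀−ω₁)^ℓ)`. -/
theorem dihedral_weighted_factorizations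
    (r : ℕ) (hr : 3 ≤ r) (ω₀ ω₁ : ℂ)
    (w : DihedralGroup r → ℂ)
    (hw0 : w (sr 0) = ω₀)
    (hw1 : ∀ i : ZMod r, i ≠ 0 → w (sr i) = ω₁)
    (ℓ : ℕ) :
    (∑ᶠ p ∈ {p : (Fin ℓ → DihedralGroup r) × DihedralGroup r |
        (∀ j, ∃ i : ZMod r, p.1 j = sr i) ∧
          (p.2 = DihedralGroup.r 1 ∨ p.2 = DihedralGroup.r (-1)) ∧
          (List.ofFn p.1).prod = p.2},
        ∏ j, w (p.1 j))
      = (1 / (r : ℂ)) * (1 + (-1 : ℂ) ^ ℓ) *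
          (((ω₀ + ((r : ℂ) - 1) * ω₁) ^ ℓ) - ((ω₀ - ω₁) ^ ℓ)) := by
  classical
  have : NeZero r := ⟨by omega⟩
  have : Fact (1 < r) := ⟨by omega⟩
  have : Fact (2 < r) := ⟨by omega⟩
  have hw : ∀ i, w (sr i) = towerWeight ω₀ ω₁ i := fun i => by
    by_cases hi : i = 0
    · simp [towerWeight, hi, hw0]
    · simp [towerWeight, hi, hw1 i hi]
  refine (finsum_factorizations_eq_sum (fun _ _ => sr.inj) (fun c => c = .r 1 ∨ c = .r (-1))
    fun q => ∏ j, w (q j)).trans ?_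
  simp only [hw]
  rcases Nat.even_or_odd ℓ with hℓ | hℓ
  · have hdisj : (1 : ZMod r) ≠ -1 := ZMod.neg_one_ne_one.symm
    have hcount := sum_prod_of_prod_ofFn_sr_eq_r _ (towerWeight_neg (G := ZMod r) ω₀ ω₁) hℓ
    rw [Finset.filter_or, Finset.sum_union, hcount, hcount, convPow_towerWeight,
      convPow_towerWeight, ZMod.card, hℓ.neg_one_pow, neg_neg]
    · simp only [neg_eq_zero, one_ne_zero, if_false, add_zero]
      ring
    · exact Finset.disjoint_filter.2 fun i _ h1 h2 => hdisj (DihedralGroup.r.inj (h1.symm.trans h2))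
  · simp [prod_ofFn_sr_ne_r hℓ, hℓ.neg_one_pow]
end
end
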